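/- arXiv:2601.21471 — 2 statements merged into one kernel-verified Lean document; each statement's English description precedes it below -/
import Mathlib

section
/- Let (X, F) be random with g(X, F) = E[(Y − F)² | X, F] ≥ 0, and consider audit policies π: range(X,F) → [π_min, 1] with E[π(X,F)] ≤ ρ. Among all such policies, the objective J(π) = E[g(X,F)/π(X,F)] is minimized by a policy of the form π*(x,f) = clip(sqrt(g(x,f))/sqrt(λ), π_min, 1) for some Lagrange multiplier λ > 0 chosen so the budget constraint binds (assuming feasibility): for any feasible π and the λ achieving E[π*] = ρ, J(π) ≥ J(π*). -/
/-!
For `λ > 0` the pointwise Lagrangian `p ↦ g/p + λ p` on `p > 0` is convex with minimiser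
`√(g/λ)` when `g ≥ 0`, and increasing when `g < 0` (where `√(g/λ) = 0`); either way its
minimum over `[π_min, 1]` is at the clipped point `π*`. Integrating the pointwise inequality
`g/π* + λ π* ≤ g/π + λ π` and using `λ E[π] ≤ λ ρ = λ E[π*]` gives `E[g/π*] ≤ E[g/π]`.
-/

open MeasureTheory Real

theorem div_add_mul_le_div_add_mul_of_nonneg {G lam p q : ℝ} (hp : 0 < p) (hq : 0 < q)
    (h : 0 ≤ (p - q) * (lam * p * q - G)) : G / q + lam * q ≤ G / p + lam * p := by
  have key : G / p + lam * p - (G / q + lam * q) = (p - q) * (lam * p * q - G) / (p * q) := by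
    field_simp
    ring
  rw [← sub_nonneg, key]
  positivity

theorem mul_sqrt_div_sq_of_pos {G lam : ℝ} (hlam : 0 < lam) (hs : 0 < √(G / lam)) :
    lam * √(G / lam) ^ 2 = G := by
  rw [sq_sqrt (sqrt_pos.mp hs).le]
  field_simp

theorem le_mul_sqrt_div_sq (G : ℝ) {lam : ℝ} (hlam : 0 < lam) : G ≤ lam * √(G / lam) ^ 2 := by
  rcases le_total 0 G with hG | hG
  · rw [sq_sqrt (div_nonneg hG hlam.le), mul_div_cancel₀ _ hlam.ne']
  · exact hG.trans (by positivity)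

theorem div_add_mul_clip_sqrt_le (G : ℝ) {lam a p : ℝ} (hlam : 0 < lam) (ha : 0 < a)
    (hp : p ∈ Set.Icc a 1) :
    G / min (max √(G / lam) a) 1 + lam * min (max √(G / lam) a) 1 ≤ G / p + lam * p := by
  obtain ⟨hap, hp1⟩ := hp
  set s := √(G / lam)
  have hq : 0 < min (max s a) 1 := lt_min (ha.trans_le (le_max_right _ _)) one_pos
  refine div_add_mul_le_div_add_mul_of_nonneg (ha.trans_le hap) hq ?_
  rcases le_total s a with hsa | has
  · rw [max_eq_right hsa, min_eq_left (hap.trans hp1)]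
    have : G ≤ lam * p * a := calc
      G ≤ lam * s ^ 2 := le_mul_sqrt_div_sq G hlam
      _ ≤ lam * a ^ 2 := by gcongr
      _ ≤ lam * p * a := by nlinarith [mul_le_mul_of_nonneg_left hap (mul_nonneg hlam.le ha.le)]
    exact mul_nonneg (by linarith) (by linarith)
  have hG : lam * s ^ 2 = G := mul_sqrt_div_sq_of_pos hlam (ha.trans_le has)
  rcases le_total s 1 with hs1 | h1s
  · rw [max_eq_left has, min_eq_left hs1, ← hG]
    have : 0 < s := ha.trans_le has
    have : (p - s) * (lam * p * s - lam * s ^ 2) = lam * s * (p - s) ^ 2 := by ring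
    rw [this]
    positivity
  · rw [min_eq_right (h1s.trans (le_max_left _ _)), ← hG]
    have : lam * p ≤ lam * s ^ 2 := by
      gcongr
      nlinarith
    exact mul_nonneg_of_nonpos_of_nonpos (by linarith) (by linarith)

theorem integral_le_of_lagrangian_le {Ω : Type*} [MeasurableSpace Ω] {μ : Measure Ω}
    {u v q p : Ω → ℝ} {lam : ℝ} (hlam : 0 ≤ lam) (hu : Integrable u μ) (hv : Integrable v μ)
    (hq : Integrable q μ) (hp : Integrable p μ)
    (hpt : ∀ ω, u ω + lam * q ω ≤ v ω + lam * p ω) (hbudget : ∫ ω, p ω ∂μ ≤ ∫ ω, q ω ∂μ) :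
    ∫ ω, u ω ∂μ ≤ ∫ ω, v ω ∂μ := by
  have hmono : ∫ ω, u ω + lam * q ω ∂μ ≤ ∫ ω, v ω + lam * p ω ∂μ :=
    integral_mono (hu.add (hq.const_mul lam)) (hv.add (hp.const_mul lam)) hpt
  rw [integral_add hu (hq.const_mul lam), integral_add hv (hp.const_mul lam),
    integral_const_mul, integral_const_mul] at hmono
  nlinarith

theorem integrable_div_of_le {Ω : Type*} [MeasurableSpace Ω] {μ : Measure Ω} {g f : Ω → ℝ}
    {c : ℝ} (hc : 0 < c) (hg : Integrable g μ) (hf : AEStronglyMeasurable f μ)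
    (hcf : ∀ ω, c ≤ f ω) : Integrable (fun ω => g ω / f ω) μ := by
  have hbound : ∀ ω, ‖(f ω)⁻¹‖ ≤ c⁻¹ := fun ω => by
    rw [norm_inv, norm_of_nonneg (hc.le.trans (hcf ω))]
    exact inv_anti₀ hc (hcf ω)
  simpa only [div_eq_inv_mul] using hg.bdd_mul (f := fun ω => (f ω)⁻¹)
    hf.aemeasurable.inv.aestronglyMeasurable (Filter.Eventually.of_forall hbound)

theorem integrable_of_mem_Icc {Ω : Type*} [MeasurableSpace Ω] {μ : Measure Ω}
    [IsFiniteMeasure μ] {f : Ω → ℝ} {a : ℝ} (ha : 0 ≤ a) (hf : AEStronglyMeasurable f μ)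
    (hbound : ∀ ω, f ω ∈ Set.Icc a 1) : Integrable f μ :=
  Integrable.of_bound hf 1 <| Filter.Eventually.of_forall fun ω => by
    rw [norm_of_nonneg (ha.trans (hbound ω).1)]
    exact (hbound ω).2

theorem oracle_optimal_auditing_general
    {Ω : Type*} [MeasurableSpace Ω] (P : Measure Ω) [IsProbabilityMeasure P]
    (g : Ω → ℝ) (hgint : Integrable g P)
    (πmin ρ lam : ℝ) (hπmin : 0 < πmin) (hlam : 0 < lam)
    (πstar : Ω → ℝ)
    (hπstar : ∀ ω, πstar ω = min (max (Real.sqrt (g ω / lam)) πmin) 1)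
    (hbind : ∫ ω, πstar ω ∂P = ρ) :
    ∀ pol : Ω → ℝ, Measurable pol → (∀ ω, πmin ≤ pol ω ∧ pol ω ≤ 1) →
      (∫ ω, pol ω ∂P) ≤ ρ →
      (∫ ω, g ω / πstar ω ∂P) ≤ ∫ ω, g ω / pol ω ∂P := by
  intro pol hpol hpolb hbudget
  obtain ⟨ω₀⟩ : Nonempty Ω := nonempty_of_isProbabilityMeasure P
  have hπmin1 : πmin ≤ 1 := (hpolb ω₀).1.trans (hpolb ω₀).2
  have hπstarb : ∀ ω, πstar ω ∈ Set.Icc πmin 1 := fun ω => by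
    rw [hπstar ω]
    exact ⟨le_min (le_max_right _ _) hπmin1, min_le_right _ _⟩
  have hπstar_meas : AEStronglyMeasurable πstar P := by
    rw [funext hπstar]
    exact ((hgint.aemeasurable.div_const lam).sqrt.max aemeasurable_const
      |>.min aemeasurable_const).aestronglyMeasurable
  refine integral_le_of_lagrangian_le hlam.le
    (integrable_div_of_le hπmin hgint hπstar_meas fun ω => (hπstarb ω).1)
    (integrable_div_of_le hπmin hgint hpol.aestronglyMeasurable fun ω => (hpolb ω).1)
    (integrable_of_mem_Icc hπmin.le hπstar_meas hπstarb)
    (integrable_of_mem_Icc hπmin.le hpol.aestronglyMeasurable hpolb)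
    (fun ω => ?_) (hbind ▸ hbudget)
  rw [hπstar ω]
  exact div_add_mul_clip_sqrt_le (g ω) hlam hπmin (hpolb ω)

/-- Oracle optimal auditing: among all audit policies `π` with values in
`[π_min, 1]` and budget `E[π] ≤ ρ`, the objective `J(π) = E[g/π]` is minimized
by the clipped square-root rule `π*(ω) = clip(√(g(ω)/λ), π_min, 1)`, where the
multiplier `λ > 0` is chosen so the budget constraint binds (`E[π*] = ρ`). -/
theorem oracle_optimal_auditing
    {Ω : Type*} [MeasurableSpace Ω] (P : Measure Ω) [IsProbabilityMeasure P]
    (g : Ω → ℝ) (hg : Measurable g) (hg0 : ∀ ω, 0 ≤ g ω) (hgint : Integrable g P)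
    (πmin ρ lam : ℝ) (hπmin : 0 < πmin) (hπmin1 : πmin ≤ 1) (hlam : 0 < lam)
    (πstar : Ω → ℝ)
    (hπstar : ∀ ω, πstar ω = min (max (Real.sqrt (g ω / lam)) πmin) 1)
    (hbind : ∫ ω, πstar ω ∂P = ρ) :
    ∀ pol : Ω → ℝ, Measurable pol → (∀ ω, πmin ≤ pol ω ∧ pol ω ≤ 1) →
      (∫ ω, pol ω ∂P) ≤ ρ →
      (∫ ω, g ω / πstar ω ∂P) ≤ ∫ ω, g ω / pol ω ∂P :=
  oracle_optimal_auditing_general P g hgint πmin ρ lam hπmin hlam πstar hπstar hbind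
end

section
/- Let (Z_t) be a martingale difference sequence with |Z_t| ≤ c almost surely for a constant c > 0, and let S_n = Z_1 + ⋯ + Z_n. Then for any fixed λ ∈ (0, 1/c) the process exp(λ S_n − λ²/(2(1−λc)) · Σ_{t≤n} E[Z_t² | F_{t−1}]) is a supermartingale, and consequently for any stopping time, Bernstein-type time-uniform deviation bounds hold: P(∃n: S_n ≥ λ/(2(1−λc)) · V_n + log(1/α)/λ) ≤ α where V_n = Σ_{t≤n} E[Z_t² | F_{t−1}]. -/
/-!
Write `κ = λ² / (2(1 - λc))`. The elementary bound `exp x ≤ 1 + x + x² / (2(1 - b))` for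
`x ≤ b`, `0 ≤ b < 1`, applied to `x = λ Z_{t+1}` with `b = λc` and conditioned on `F_t`, gives
`E[exp(λ Z_{t+1}) | F_t] ≤ 1 + κ E[Z_{t+1}² | F_t] ≤ exp(κ E[Z_{t+1}² | F_t])`, because the
linear term has conditional mean zero. So `M_n = exp(λ S_n - κ V_n)` is a nonnegative
supermartingale with `M_0 = 1`. The deviation event is `{∃ n, M_n ≥ 1/α}`, and Ville's inequality
`P(∃ n, M_n ≥ ε) ≤ E[M_0] / ε` follows by optional stopping at the first passage above `ε`
before a finite horizon, then letting the horizon grow.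
-/

open MeasureTheory Real Finset

theorem Real.exp_le_one_add_add_sq_div {b x : ℝ} (hb : 0 ≤ b) (hb1 : b < 1) (hx : x ≤ b) :
    exp x ≤ 1 + x + x ^ 2 / (2 * (1 - b)) := by
  set a := 1 / (2 * (1 - b))
  have ha : 1 / 2 ≤ a := one_div_le_one_div_of_le (by linarith) (by linarith)
  have ha' : a * (2 * (1 - b)) = 1 := one_div_mul_cancel (by linarith)
  set g : ℝ → ℝ := fun y => 1 + y + a * y ^ 2 - exp y
  have hg' (y : ℝ) : deriv g y = 1 + a * (2 * y) - exp y := by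
    refine (((hasDerivAt_id y).const_add 1).add ?_ |>.sub (hasDerivAt_exp y)).deriv
    simpa using (hasDerivAt_pow 2 y).const_mul a
  have hgc : Continuous g := by fun_prop
  have hgd : Differentiable ℝ g := by fun_prop
  -- `g` decreases on `(-∞, 0]` and increases on `[0, b]`, so it is smallest at `0`.
  suffices g 0 ≤ g x by simp [g, div_eq_mul_inv, a] at this ⊢; linarith
  rcases le_total x 0 with hx0 | hx0
  · refine antitoneOn_of_deriv_nonpos (convex_Iic 0) hgc.continuousOn hgd.differentiableOn
      (fun y hy => ?_) hx0 (Set.mem_Iic.2 le_rfl) hx0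
    rw [interior_Iic] at hy
    rw [hg']
    nlinarith [add_one_le_exp y, Set.mem_Iio.mp hy]
  · refine monotoneOn_of_deriv_nonneg (convex_Icc 0 b) hgc.continuousOn hgd.differentiableOn
      (fun y hy => ?_) (Set.left_mem_Icc.2 hb) ⟨hx0, hx⟩ hx0
    rw [interior_Icc] at hy
    obtain ⟨hy0, hyb⟩ := hy
    -- `exp y ≤ 1 / (1 - y) ≤ 1 + y / (1 - b)` on `[0, b]`
    have hexp : exp y * (1 - y) ≤ 1 := by
      have := add_one_le_exp (-y)
      calc exp y * (1 - y) ≤ exp y * exp (-y) := by gcongr; linarith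
        _ = 1 := by rw [← exp_add]; simp
    rw [hg']
    nlinarith [mul_nonneg (mul_nonneg hy0.le (sub_nonneg.2 hyb.le)) (by linarith : (0:ℝ) ≤ a)]

namespace MeasureTheory

variable {Ω : Type*} {m m0 : MeasurableSpace Ω} {μ : Measure Ω} [IsFiniteMeasure μ]

theorem condExp_exp_mul_le_exp_condExp_sq (hm : m ≤ m0) {X : Ω → ℝ} {c lam : ℝ}
    (hX : AEStronglyMeasurable X μ) (hXc : ∀ᵐ ω ∂μ, |X ω| ≤ c) (hX0 : μ[X | m] =ᵐ[μ] 0)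
    (hc : 0 ≤ c) (hlam : 0 ≤ lam) (hlamc : lam * c < 1) :
    μ[fun ω => exp (lam * X ω) | m] ≤ᵐ[μ]
      fun ω => exp (lam ^ 2 / (2 * (1 - lam * c)) * μ[fun ω => X ω ^ 2 | m] ω) := by
  set κ := lam ^ 2 / (2 * (1 - lam * c))
  have hXint : Integrable X μ := .of_bound hX c (by simpa only [norm_eq_abs] using hXc)
  have hX2int : Integrable (fun ω => X ω ^ 2) μ := by
    refine .of_bound (hX.pow 2) (c ^ 2) ?_
    filter_upwards [hXc] with ω h
    simpa only [norm_pow, norm_eq_abs] using pow_le_pow_left₀ (abs_nonneg _) h 2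
  have hexp_int : Integrable (fun ω => exp (lam * X ω)) μ := by
    refine .of_bound (continuous_exp.comp_aestronglyMeasurable (hX.const_mul lam))
      (exp (lam * c)) ?_
    filter_upwards [hXc] with ω h
    rw [norm_of_nonneg (exp_pos _).le, exp_le_exp]
    exact mul_le_mul_of_nonneg_left (abs_le.mp h).2 hlam
  set q : Ω → ℝ := (fun _ => 1) + lam • X + κ • fun ω => X ω ^ 2
  have hq_int : Integrable q μ :=
    ((integrable_const 1).add (hXint.smul lam)).add (hX2int.smul κ)
  have hexp_le_q : ∀ᵐ ω ∂μ, exp (lam * X ω) ≤ q ω := by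
    filter_upwards [hXc] with ω h
    have := exp_le_one_add_add_sq_div (mul_nonneg hlam hc) hlamc
      (mul_le_mul_of_nonneg_left (abs_le.mp h).2 hlam)
    simp only [q, Pi.add_apply, Pi.smul_apply, smul_eq_mul, κ]
    convert this using 2; ring
  have hcondExp_q : μ[q | m] =ᵐ[μ] 1 + κ • μ[fun ω => X ω ^ 2 | m] := by
    filter_upwards [condExp_add ((integrable_const 1).add (hXint.smul lam)) (hX2int.smul κ) m,
      condExp_add (integrable_const 1) (hXint.smul lam) m, condExp_smul lam X m,
      condExp_smul κ (fun ω => X ω ^ 2) m, hX0] with ω h1 h2 h3 h4 h5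
    rw [h1, Pi.add_apply, h2, Pi.add_apply, h3, h4, condExp_const hm]
    simp [h5]
  filter_upwards [condExp_mono hexp_int hq_int hexp_le_q, hcondExp_q] with ω h1 h2
  rw [h2] at h1
  exact h1.trans (by simpa [add_comm] using add_one_le_exp (κ * μ[fun ω => X ω ^ 2 | m] ω))

variable {ℱ : Filtration ℕ m0}

theorem supermartingale_exp_sum_sub {ξ ψ : ℕ → Ω → ℝ} {b : ℝ}
    (hξ : ∀ t, StronglyMeasurable[ℱ (t + 1)] (ξ t)) (hξb : ∀ t, ∀ᵐ ω ∂μ, ξ t ω ≤ b)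
    (hψ : ∀ t, StronglyMeasurable[ℱ t] (ψ t)) (hψ0 : ∀ t, 0 ≤ᵐ[μ] ψ t)
    (hstep : ∀ t, μ[fun ω => exp (ξ t ω) | ℱ t] ≤ᵐ[μ] fun ω => exp (ψ t ω)) :
    Supermartingale (fun n ω => exp (∑ t ∈ range n, (ξ t ω - ψ t ω))) ℱ μ := by
  set M : ℕ → Ω → ℝ := fun n ω => exp (∑ t ∈ range n, (ξ t ω - ψ t ω))
  have hM_meas (n : ℕ) : StronglyMeasurable[ℱ n] (M n) :=
    continuous_exp.comp_stronglyMeasurable <| Finset.stronglyMeasurable_fun_sum _ fun t ht =>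
      ((hξ t).mono (ℱ.mono (mem_range.mp ht))).sub ((hψ t).mono (ℱ.mono (mem_range.mp ht).le))
  have hM_int (n : ℕ) : Integrable (M n) μ := by
    refine .of_bound ((hM_meas n).mono (ℱ.le n)).aestronglyMeasurable (exp (n * b)) ?_
    filter_upwards [ae_all_iff.2 hξb, ae_all_iff.2 hψ0] with ω hξω hψω
    rw [norm_of_nonneg (exp_pos _).le, exp_le_exp]
    calc ∑ t ∈ range n, (ξ t ω - ψ t ω) ≤ ∑ t ∈ range n, b :=
          sum_le_sum fun t _ => by linarith [hξω t, show 0 ≤ ψ t ω from hψω t]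
      _ = n * b := by simp
  have hexp_int (t : ℕ) : Integrable (fun ω => exp (ξ t ω)) μ := by
    refine .of_bound (continuous_exp.comp_stronglyMeasurable
      ((hξ t).mono (ℱ.le _))).aestronglyMeasurable (exp b) ?_
    filter_upwards [hξb t] with ω h
    rwa [norm_of_nonneg (exp_pos _).le, exp_le_exp]
  refine supermartingale_nat hM_meas hM_int fun n => ?_
  set G : Ω → ℝ := fun ω => M n ω * exp (-ψ n ω)
  have hG_meas : StronglyMeasurable[ℱ n] G :=
    (hM_meas n).mul (continuous_exp.comp_stronglyMeasurable (hψ n).neg)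
  have hM_succ : M (n + 1) = G * fun ω => exp (ξ n ω) := by
    ext ω
    simp only [M, G, Pi.mul_apply, sum_range_succ, ← exp_add]
    ring_nf
  rw [hM_succ]
  filter_upwards [condExp_mul_of_stronglyMeasurable_left hG_meas (hM_succ ▸ hM_int (n + 1))
    (hexp_int n), hstep n] with ω h_pull h_step
  calc _ = G ω * μ[fun ω => exp (ξ n ω) | ℱ n] ω := h_pull
    _ ≤ G ω * exp (ψ n ω) := by gcongr
    _ = M n ω := by simp only [G, mul_assoc, ← exp_add, neg_add_cancel, exp_zero, mul_one]

theorem Supermartingale.mul_measureReal_exists_le_ge_le {f : ℕ → Ω → ℝ}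
    (hf : Supermartingale f ℱ μ) (hf0 : 0 ≤ f) {ε : ℝ} (hε : 0 ≤ ε) (n : ℕ) :
    ε * μ.real {ω | ∃ k ≤ n, ε ≤ f k ω} ≤ ∫ ω, f 0 ω ∂μ := by
  set τ : Ω → ℕ∞ := fun ω => (hittingBtwn f (Set.Ici ε) 0 n ω : ℕ)
  have hτ : IsStoppingTime ℱ τ :=
    hf.stronglyAdapted.adapted.isStoppingTime_hittingBtwn measurableSet_Ici
  have hτn (ω : Ω) : τ ω ≤ n := by
    simpa [τ] using hittingBtwn_le (u := f) (s := Set.Ici ε) (n := 0) ω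
  have hsub : {ω | ∃ k ≤ n, ε ≤ f k ω} ⊆ {ω | ε ≤ stoppedValue f τ ω} := by
    rintro ω ⟨k, hkn, hk⟩
    exact stoppedValue_hittingBtwn_mem ⟨k, ⟨k.zero_le, hkn⟩, hk⟩
  have hopt : ∫ ω, stoppedValue f τ ω ∂μ ≤ ∫ ω, f 0 ω ∂μ := by
    simpa [stoppedValue, integral_neg] using
      hf.neg.expected_stoppedValue_mono (isStoppingTime_const ℱ 0) hτ (fun ω => zero_le) hτn
  calc ε * μ.real {ω | ∃ k ≤ n, ε ≤ f k ω}
      ≤ ε * μ.real {ω | ε ≤ stoppedValue f τ ω} :=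
        mul_le_mul_of_nonneg_left (measureReal_mono hsub) hε
    _ ≤ ∫ ω, stoppedValue f τ ω ∂μ :=
        mul_meas_ge_le_integral_of_nonneg (.of_forall fun ω => hf0 _ ω)
          (integrable_stoppedValue ℕ hτ hf.integrable hτn) ε
    _ ≤ ∫ ω, f 0 ω ∂μ := hopt

theorem Supermartingale.measure_exists_ge_le {f : ℕ → Ω → ℝ}
    (hf : Supermartingale f ℱ μ) (hf0 : 0 ≤ f) {ε : ℝ} (hε : 0 < ε) :
    μ {ω | ∃ n, ε ≤ f n ω} ≤ ENNReal.ofReal ((∫ ω, f 0 ω ∂μ) / ε) := by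
  have hunion : {ω | ∃ n, ε ≤ f n ω} = ⋃ n, {ω | ∃ k ≤ n, ε ≤ f k ω} := by
    ext ω
    simp only [Set.mem_ofPred_eq, Set.mem_iUnion]
    exact ⟨fun ⟨n, hn⟩ => ⟨n, n, le_rfl, hn⟩, fun ⟨_, k, _, hk⟩ => ⟨k, hk⟩⟩
  have hmono : Monotone fun n => {ω | ∃ k ≤ n, ε ≤ f k ω} :=
    fun _ _ hnm _ ⟨k, hk, h⟩ => ⟨k, hk.trans hnm, h⟩
  rw [hunion, hmono.measure_iUnion]
  refine iSup_le fun n => ?_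
  rw [← ofReal_measureReal]
  exact ENNReal.ofReal_le_ofReal <|
    (le_div_iff₀' hε).2 (hf.mul_measureReal_exists_le_ge_le hf0 hε.le n)

theorem supermartingale_exp_bernstein {Z : ℕ → Ω → ℝ} {c lam : ℝ}
    (hZ : ∀ t, StronglyMeasurable[ℱ (t + 1)] (Z (t + 1))) (hZc : ∀ t, ∀ᵐ ω ∂μ, |Z (t + 1) ω| ≤ c)
    (hZ0 : ∀ t, μ[Z (t + 1) | ℱ t] =ᵐ[μ] 0) (hc : 0 ≤ c) (hlam : 0 ≤ lam) (hlamc : lam * c < 1) :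
    Supermartingale (fun n ω => exp (lam * ∑ t ∈ range n, Z (t + 1) ω -
      lam ^ 2 / (2 * (1 - lam * c)) * ∑ t ∈ range n, μ[fun ω' => Z (t + 1) ω' ^ 2 | ℱ t] ω))
      ℱ μ := by
  set κ := lam ^ 2 / (2 * (1 - lam * c))
  simp only [mul_sum, ← sum_sub_distrib]
  refine supermartingale_exp_sum_sub (b := lam * c) (fun t => (hZ t).const_mul lam)
    (fun t => ?_) (fun t => stronglyMeasurable_condExp.const_mul κ) (fun t => ?_) fun t =>
    condExp_exp_mul_le_exp_condExp_sq (ℱ.le t) ((hZ t).mono (ℱ.le _)).aestronglyMeasurable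
      (hZc t) (hZ0 t) hc hlam hlamc
  · filter_upwards [hZc t] with ω h
    exact mul_le_mul_of_nonneg_left (abs_le.mp h).2 hlam
  · filter_upwards [condExp_nonneg (.of_forall fun ω => sq_nonneg (Z (t + 1) ω))] with ω h
    exact mul_nonneg (div_nonneg (sq_nonneg _) (by linarith)) h

end MeasureTheory

theorem bernstein_time_uniform_general
    {Ω : Type*} {m0 : MeasurableSpace Ω} (P : Measure Ω) [IsProbabilityMeasure P]
    (ℱ : Filtration ℕ m0) (Z : ℕ → Ω → ℝ) (c : ℝ)
    (hadapted : ∀ t, StronglyMeasurable[ℱ (t + 1)] (Z (t + 1)))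
    (hbdd : ∀ t, ∀ᵐ ω ∂P, |Z (t + 1) ω| ≤ c)
    (hmds : ∀ t, P[Z (t + 1) | ℱ t] =ᵐ[P] 0)
    (lam α : ℝ) (hlam : 0 < lam) (hlamc : lam < 1 / c) (hα : α ∈ Set.Ioo (0 : ℝ) 1)
    (S V : ℕ → Ω → ℝ)
    (hS : ∀ n ω, S n ω = ∑ t ∈ Finset.range n, Z (t + 1) ω)
    (hV : ∀ n ω, V n ω = ∑ t ∈ Finset.range n, (P[fun ω' => (Z (t + 1) ω') ^ 2 | ℱ t]) ω) :
    Supermartingale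
      (fun n ω => Real.exp (lam * S n ω - lam ^ 2 / (2 * (1 - lam * c)) * V n ω)) ℱ P ∧
    P {ω | ∃ n : ℕ, S n ω ≥ lam / (2 * (1 - lam * c)) * V n ω + Real.log (1 / α) / lam}
      ≤ ENNReal.ofReal α := by
  have hc : 0 < c := one_div_pos.mp (hlam.trans hlamc)
  have hlamc' : lam * c < 1 := (lt_div_iff₀ hc).mp hlamc
  set κ := lam ^ 2 / (2 * (1 - lam * c))
  set M : ℕ → Ω → ℝ := fun n ω => exp (lam * S n ω - κ * V n ω)
  have hsuper : Supermartingale M ℱ P := by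
    simpa only [M, hS, hV] using
      supermartingale_exp_bernstein hadapted hbdd hmds hc.le hlam.le hlamc'
  refine ⟨hsuper, ?_⟩
  have hevent : {ω | ∃ n : ℕ, S n ω ≥ lam / (2 * (1 - lam * c)) * V n ω + log (1 / α) / lam}
      = {ω | ∃ n, 1 / α ≤ M n ω} := by
    ext ω
    refine exists_congr fun n => ?_
    have hscale : lam * (lam / (2 * (1 - lam * c)) * V n ω + log (1 / α) / lam)
        = κ * V n ω + log (1 / α) := by
      simp only [κ]
      field_simp
    rw [ge_iff_le, ← mul_le_mul_iff_of_pos_left hlam, hscale,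
      ← log_le_iff_le_exp (one_div_pos.2 hα.1)]
    exact le_sub_iff_add_le'.symm
  rw [hevent]
  calc P {ω | ∃ n, 1 / α ≤ M n ω} ≤ ENNReal.ofReal ((∫ ω, M 0 ω ∂P) / (1 / α)) :=
        hsuper.measure_exists_ge_le (fun n ω => (exp_pos _).le) (one_div_pos.2 hα.1)
    _ = ENNReal.ofReal α := by simp [M, hS, hV]

/-- Bernstein/Freedman-type supermartingale and time-uniform deviation bound:
for a bounded martingale difference sequence `|Z_t| ≤ c` with conditional variance
process `V_n = Σ_{t≤n} E[Z_t² | F_{t−1}]`, and `0 < λ < 1/c`, the process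
`exp(λ S_n − λ²/(2(1−λc)) V_n)` is a supermartingale, and
`P(∃ n : S_n ≥ λ/(2(1−λc)) V_n + log(1/α)/λ) ≤ α`. -/
theorem bernstein_time_uniform
    {Ω : Type*} {m0 : MeasurableSpace Ω} (P : Measure Ω) [IsProbabilityMeasure P]
    (ℱ : Filtration ℕ m0) (Z : ℕ → Ω → ℝ) (c : ℝ) (hc : 0 < c)
    (hadapted : ∀ t, StronglyMeasurable[ℱ (t + 1)] (Z (t + 1)))
    (hbdd : ∀ t, ∀ᵐ ω ∂P, |Z (t + 1) ω| ≤ c)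
    (hmds : ∀ t, P[Z (t + 1) | ℱ t] =ᵐ[P] 0)
    (lam α : ℝ) (hlam : 0 < lam) (hlamc : lam < 1 / c) (hα : α ∈ Set.Ioo (0 : ℝ) 1)
    (S V : ℕ → Ω → ℝ)
    (hS : ∀ n ω, S n ω = ∑ t ∈ Finset.range n, Z (t + 1) ω)
    (hV : ∀ n ω, V n ω = ∑ t ∈ Finset.range n, (P[fun ω' => (Z (t + 1) ω') ^ 2 | ℱ t]) ω) :
    Supermartingale
      (fun n ω => Real.exp (lam * S n ω - lam ^ 2 / (2 * (1 - lam * c)) * V n ω)) ℱ P ∧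
    P {ω | ∃ n : ℕ, S n ω ≥ lam / (2 * (1 - lam * c)) * V n ω + Real.log (1 / α) / lam}
      ≤ ENNReal.ofReal α :=
  bernstein_time_uniform_general P ℱ Z c hadapted hbdd hmds lam α hlam hlamc hα S V hS hV
end
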